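/- arXiv:1610.08920 — 2 statements merged into one kernel-verified Lean document; each statement's English description precedes it below -/
import Mathlib

section
/- The function A(x,y,z) = (a-x)² + (a-z)² + (x-z)² + (b-x)² + (b-y)² + (x-y)² + (c-y)² + (c-z)² + (y-z)² attains its minimum over real x, y, z exactly at x = (2a+2b+c)/5, y = (a+2b+2c)/5, z = (2a+b+2c)/5, and the minimum value equals (3/5)·[(a-b)² + (b-c)² + (a-c)²]. -/
/-- The energy contribution of the three sub-triangles generated by one triangle
with vertex values `a, b, c` and interpolated values `x, y, z`. -/
noncomputable def triEnergy (a b c x y z : ℝ) : ℝ :=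
  (a-x)^2 + (a-z)^2 + (x-z)^2 + (b-x)^2 + (b-y)^2 + (x-y)^2 + (c-y)^2 + (c-z)^2 + (y-z)^2

lemma triEnergy_key (a b c x y z : ℝ) :
    triEnergy a b c x y z = (3/5) * ((a-b)^2 + (b-c)^2 + (a-c)^2)
      + 2*(x - (2*a+2*b+c)/5)^2 + 2*(y - (a+2*b+2*c)/5)^2 + 2*(z - (2*a+b+2*c)/5)^2
      + ((x - (2*a+2*b+c)/5) - (y - (a+2*b+2*c)/5))^2
      + ((y - (a+2*b+2*c)/5) - (z - (2*a+b+2*c)/5))^2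
      + ((x - (2*a+2*b+c)/5) - (z - (2*a+b+2*c)/5))^2 := by
  unfold triEnergy; ring

/-- `A(x,y,z)` attains its minimum exactly at `x=(2a+2b+c)/5, y=(a+2b+2c)/5, z=(2a+b+2c)/5`,
with minimum value `(3/5)·[(a-b)² + (b-c)² + (a-c)²]`. -/
theorem stmt_0 (a b c : ℝ) :
    triEnergy a b c ((2*a+2*b+c)/5) ((a+2*b+2*c)/5) ((2*a+b+2*c)/5)
      = (3/5) * ((a-b)^2 + (b-c)^2 + (a-c)^2) ∧
    (∀ x y z : ℝ, (3/5) * ((a-b)^2 + (b-c)^2 + (a-c)^2) ≤ triEnergy a b c x y z) ∧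
    (∀ x y z : ℝ, triEnergy a b c x y z = (3/5) * ((a-b)^2 + (b-c)^2 + (a-c)^2) →
      x = (2*a+2*b+c)/5 ∧ y = (a+2*b+2*c)/5 ∧ z = (2*a+b+2*c)/5) := by
  refine ⟨by rw [triEnergy_key]; ring, fun x y z => ?_, fun x y z h => ?_⟩
  · rw [triEnergy_key]; nlinarith [sq_nonneg (x - (2*a+2*b+c)/5), sq_nonneg (y - (a+2*b+2*c)/5),
      sq_nonneg (z - (2*a+b+2*c)/5), sq_nonneg ((x - (2*a+2*b+c)/5) - (y - (a+2*b+2*c)/5)),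
      sq_nonneg ((y - (a+2*b+2*c)/5) - (z - (2*a+b+2*c)/5)),
      sq_nonneg ((x - (2*a+2*b+c)/5) - (z - (2*a+b+2*c)/5))]
  · rw [triEnergy_key] at h
    set u := x - (2*a+2*b+c)/5 with hu
    set v := y - (a+2*b+2*c)/5 with hv
    set w := z - (2*a+b+2*c)/5 with hw
    clear_value u v w
    have h1 : u^2 = 0 := by
      linarith [sq_nonneg u, sq_nonneg v, sq_nonneg w, sq_nonneg (u-v), sq_nonneg (v-w),
        sq_nonneg (u-w)]
    have h2 : v^2 = 0 := by
      linarith [sq_nonneg u, sq_nonneg v, sq_nonneg w, sq_nonneg (u-v), sq_nonneg (v-w),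
        sq_nonneg (u-w)]
    have h3 : w^2 = 0 := by
      linarith [sq_nonneg u, sq_nonneg v, sq_nonneg w, sq_nonneg (u-v), sq_nonneg (v-w),
        sq_nonneg (u-w)]
    have h1' : u = 0 := by exact pow_eq_zero_iff two_ne_zero |>.mp h1
    have h2' : v = 0 := by exact pow_eq_zero_iff two_ne_zero |>.mp h2
    have h3' : w = 0 := by exact pow_eq_zero_iff two_ne_zero |>.mp h3
    rw [hu] at h1'; rw [hv] at h2'; rw [hw] at h3'
    exact ⟨by linarith, by linarith, by linarith⟩
end

section
/- For the λ-return ratio random walk on the Sierpiński graph with λ ∈ (0,1), the Green function at the root is G(o,o) = 1/(1-λ) and the hitting probability of the root satisfies F(x,o) = λ^{|x|} for every vertex x. -/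
open scoped ENNReal

noncomputable section
open Classical

/-- The three vertices of the initial triangle. -/
def sgPt : Fin 3 → ℝ × ℝ
  | 0 => (0, 0)
  | 1 => (1, 0)
  | 2 => (1/2, Real.sqrt 3 / 2)

/-- The contraction maps of the Sierpiński gasket IFS. -/
def sgMap (i : Fin 3) (x : ℝ × ℝ) : ℝ × ℝ :=
  ((x.1 + (sgPt i).1) / 2, (x.2 + (sgPt i).2) / 2)

/-- The vertex sets `V_n`. -/
def sgV : ℕ → Set (ℝ × ℝ)
  | 0 => {sgPt 0, sgPt 1, sgPt 2}
  | (n+1) => ⋃ i : Fin 3, sgMap i '' sgV n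

/-- The Sierpiński gasket `K`, closure of `⋃ n, V_n`. -/
def SG : Set (ℝ × ℝ) := closure (⋃ n, sgV n)

/-- A vertex of the Sierpiński graph: a finite word over `{0,1,2}`; the root is `[]`. -/
abbrev Word := List (Fin 3)

/-- `f_w = f_{w₁} ∘ ⋯ ∘ f_{w_n}`. -/
def wordMap (w : Word) : ℝ × ℝ → ℝ × ℝ := w.foldr (fun i g => sgMap i ∘ g) id

/-- The cell `K_w = f_w(K)`. -/
def cell (w : Word) : Set (ℝ × ℝ) := wordMap w '' SG

/-- `p_w = f_{w₁…w_{n-1}}(p_{w_n})` for a nonempty word `w`. -/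
def wordPt (w : Word) : ℝ × ℝ :=
  match w.getLast? with
  | none => sgPt 0
  | some i => wordMap w.dropLast (sgPt i)

/-- The conductances of the λ-return ratio random walk on the Sierpiński graph:
vertical edges `(w, w⁻)` get `(3λ)^{-|w⁻|}`; horizontal edges (same length, intersecting
cells) get `C₁(3λ)^{-n}` (type I, `p_x ≠ p_y`) or `C₂(3λ)^{-n}` (type II, `p_x = p_y`). -/
def sgCond (lam C1 C2 : ℝ) (x y : Word) : ℝ :=
  if x ≠ [] ∧ y = x.dropLast then (1/(3*lam)) ^ y.length
  else if y ≠ [] ∧ x = y.dropLast then (1/(3*lam)) ^ x.length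
  else if x.length = y.length ∧ x ≠ y ∧ (cell x ∩ cell y).Nonempty then
    (if wordPt x = wordPt y then C2 else C1) * (1/(3*lam)) ^ x.length
  else 0

/-- `π(x) = ∑_y c(x,y)`. -/
def sgPi (lam C1 C2 : ℝ) (x : Word) : ℝ := ∑' y : Word, sgCond lam C1 C2 x y

/-- Transition probability `P(x,y) = c(x,y)/π(x)`. -/
def sgP (lam C1 C2 : ℝ) (x y : Word) : ℝ≥0∞ :=
  ENNReal.ofReal (sgCond lam C1 C2 x y / sgPi lam C1 C2 x)

/-- `n`-step transition probabilities. -/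
def sgPk (lam C1 C2 : ℝ) : ℕ → Word → Word → ℝ≥0∞
  | 0 => fun x y => if x = y then 1 else 0
  | (n+1) => fun x y => ∑' z : Word, sgP lam C1 C2 x z * sgPk lam C1 C2 n z y

/-- Green function `G(x,y) = ∑_n P^{(n)}(x,y)`. -/
def sgG (lam C1 C2 : ℝ) (x y : Word) : ℝ≥0∞ := ∑' n : ℕ, sgPk lam C1 C2 n x y

/-- Probability of first hitting the root `o = []` at time `n`. -/
def sgFk (lam C1 C2 : ℝ) : ℕ → Word → ℝ≥0∞
  | 0 => fun x => if x = [] then 1 else 0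
  | (n+1) => fun x => if x = [] then 0 else ∑' y : Word, sgP lam C1 C2 x y * sgFk lam C1 C2 n y

/-- Probability `F(x,o)` of ever hitting the root `o = []` starting from `x`. -/
def sgF (lam C1 C2 : ℝ) (x : Word) : ℝ≥0∞ := ∑' n : ℕ, sgFk lam C1 C2 n x

/-!
The function `h x = λ ^ |x|` is harmonic for the walk away from the root: horizontal moves
keep `|x|`, and from `x = l ++ [i]` the parent edge, of conductance `(3λ)^{-|l|}`, exactly
balances the three child edges, each of conductance `(3λ)^{-|l|-1}`. At the root
`P h (o) = λ = h o - (1 - λ)`. Iterating gives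
`h x = E_x h(X_n) + (1 - λ) ∑_{k<n} P^k(x, o)`, so `G(x, o) < ∞`; then `P^n(x, y) → 0` for
every `y` (each `y` reaches `o`), and since `h` vanishes at infinity `E_x h(X_n) → 0`.
Hence `(1 - λ) G(x, o) = λ ^ |x|`, and the renewal identity `G(x, o) = F(x, o) G(o, o)`
yields `F`.
-/

open Finset in
theorem ENNReal.tsum_mul_tsum_eq_tsum_sum_antidiagonal (f g : ℕ → ℝ≥0∞) :
    (∑' n, f n) * ∑' n, g n = ∑' n, ∑ kl ∈ antidiagonal n, f kl.1 * g kl.2 := by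
  calc (∑' n, f n) * ∑' n, g n = ∑' kl : ℕ × ℕ, f kl.1 * g kl.2 := by
        rw [ENNReal.tsum_prod (f := fun k l => f k * g l), ← ENNReal.tsum_mul_right]
        simp only [ENNReal.tsum_mul_left]
    _ = ∑' x : Σ n, antidiagonal n, f x.2.1.1 * g x.2.1.2 :=
        (HasAntidiagonal.sigmaAntidiagonalEquivProd.tsum_eq
          (fun kl : ℕ × ℕ => f kl.1 * g kl.2)).symm
    _ = _ := by
        rw [ENNReal.tsum_sigma']
        simp only [tsum_subtype (antidiagonal _) (fun kl => f kl.1 * g kl.2)]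

namespace RandomWalk

open Filter Topology Finset

variable {α : Type*} (P : α → α → ℝ≥0∞)

def pow : ℕ → α → α → ℝ≥0∞
  | 0 => fun x y => if x = y then 1 else 0
  | n + 1 => fun x y => ∑' z, P x z * pow n z y

def firstHit (o : α) : ℕ → α → ℝ≥0∞
  | 0 => fun x => if x = o then 1 else 0
  | n + 1 => fun x => if x = o then 0 else ∑' y, P x y * firstHit o n y

def green (x y : α) : ℝ≥0∞ := ∑' n, pow P n x y

def hitProb (o x : α) : ℝ≥0∞ := ∑' n, firstHit P o n x

variable {P}

theorem pow_zero_apply (x y : α) : pow P 0 x y = if x = y then 1 else 0 := rfl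

theorem pow_succ_apply (n : ℕ) (x y : α) : pow P (n + 1) x y = ∑' z, P x z * pow P n z y := rfl

theorem tsum_pow_zero_mul (x : α) (f : α → ℝ≥0∞) : ∑' y, pow P 0 x y * f y = f x := by
  rw [tsum_eq_single x fun y hy => by rw [pow_zero_apply, if_neg (Ne.symm hy), zero_mul],
    pow_zero_apply, if_pos rfl, one_mul]

theorem pow_add (m n : ℕ) (x y : α) :
    pow P (m + n) x y = ∑' z, pow P m x z * pow P n z y := by
  induction m generalizing x with
  | zero => rw [Nat.zero_add, tsum_pow_zero_mul]
  | succ m ih =>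
    calc pow P (m + 1 + n) x y = ∑' w, P x w * ∑' z, pow P m w z * pow P n z y := by
          rw [Nat.add_right_comm, pow_succ_apply]; simp only [ih]
      _ = ∑' z, (∑' w, P x w * pow P m w z) * pow P n z y := by
          simp only [← ENNReal.tsum_mul_left, ← ENNReal.tsum_mul_right, mul_assoc]
          exact ENNReal.tsum_comm
      _ = ∑' z, pow P (m + 1) x z * pow P n z y := rfl

theorem pow_succ_apply' (n : ℕ) (x y : α) :
    pow P (n + 1) x y = ∑' z, pow P n x z * P z y := by
  rw [pow_add]
  congr! 3 with z
  rw [pow_succ_apply, tsum_eq_single y fun w hw => by rw [pow_zero_apply, if_neg hw, mul_zero],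
    pow_zero_apply, if_pos rfl, mul_one]

theorem tsum_pow_le_one (hP : ∀ x, ∑' y, P x y ≤ 1) (n : ℕ) (x : α) :
    ∑' y, pow P n x y ≤ 1 := by
  induction n generalizing x with
  | zero => simpa using (tsum_pow_zero_mul (P := P) x 1).le
  | succ n ih =>
    calc ∑' y, pow P (n + 1) x y = ∑' z, P x z * ∑' y, pow P n z y := by
          simp only [pow_succ_apply, ← ENNReal.tsum_mul_left]
          exact ENNReal.tsum_comm
      _ ≤ ∑' z, P x z * 1 := by gcongr with z; exact ih z
      _ ≤ 1 := by simpa using hP x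

theorem pow_eq_sum_firstHit_mul (o x : α) (n : ℕ) :
    pow P n x o = ∑ kl ∈ antidiagonal n, firstHit P o kl.1 x * pow P kl.2 o o := by
  induction n generalizing x with
  | zero => by_cases hx : x = o <;> simp [hx, pow_zero_apply, firstHit]
  | succ n ih =>
    rw [Nat.sum_antidiagonal_succ]
    by_cases hx : x = o
    · subst hx; simp [firstHit]
    · simp only [firstHit, if_neg hx, zero_mul, zero_add, ← ENNReal.tsum_mul_right]
      rw [← Summable.tsum_finsetSum fun _ _ => ENNReal.summable, pow_succ_apply]
      refine tsum_congr fun z => ?_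
      rw [ih, Finset.mul_sum]
      simp only [mul_assoc]

theorem green_eq_hitProb_mul (o x : α) : green P x o = hitProb P o x * green P o o := by
  rw [hitProb, green, green, ENNReal.tsum_mul_tsum_eq_tsum_sum_antidiagonal]
  exact tsum_congr (pow_eq_sum_firstHit_mul o x)

/-- `P^n(x, y) P^m(y, o) ≤ P^{n+m}(x, o)`, and the right side is summable in `n`. -/
theorem tendsto_pow_of_green_ne_top {x y o : α} (hG : green P x o ≠ ⊤) {m : ℕ}
    (hm : pow P m y o ≠ 0) : Tendsto (fun n => pow P n x y) atTop (𝓝 0) := by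
  have hxo : Tendsto (fun n => pow P (n + m) x o * (pow P m y o)⁻¹) atTop (𝓝 0) := by
    simpa using ENNReal.Tendsto.mul_const
      ((ENNReal.tendsto_atTop_zero_of_tsum_ne_top hG).comp (tendsto_add_atTop_nat m))
      (Or.inr (ENNReal.inv_ne_top.mpr hm))
  refine tendsto_of_tendsto_of_tendsto_of_le_of_le tendsto_const_nhds hxo (fun _ => zero_le)
    fun n => ?_
  have hfin : pow P (n + m) x o ≠ ⊤ := ne_top_of_le_ne_top hG (ENNReal.le_tsum _)
  rw [← div_eq_mul_inv, ENNReal.le_div_iff_mul_le (Or.inl hm) (Or.inr hfin), pow_add]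
  exact ENNReal.le_tsum y

theorem tsum_pow_succ_mul (n : ℕ) (x : α) (f : α → ℝ≥0∞) :
    ∑' y, pow P (n + 1) x y * f y = ∑' z, pow P n x z * ∑' y, P z y * f y := by
  simp only [pow_succ_apply', ← ENNReal.tsum_mul_right, ← ENNReal.tsum_mul_left, mul_assoc]
  exact ENNReal.tsum_comm

theorem tendsto_tsum_pow_mul_of_tendsto_cofinite (hP : ∀ x, ∑' y, P x y ≤ 1)
    {h : α → ℝ≥0∞} (hfin : ∀ y, h y ≠ ⊤) (hzero : Tendsto h cofinite (𝓝 0)) {x : α}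
    (hpow : ∀ y, Tendsto (fun n => pow P n x y) atTop (𝓝 0)) :
    Tendsto (fun n => ∑' y, pow P n x y * h y) atTop (𝓝 0) := by
  refine ENNReal.tendsto_nhds_zero.2 fun ε hε => ?_
  have hε2 : 0 < ε / 2 := ENNReal.half_pos hε.ne'
  have hlarge := eventually_cofinite.1 (ENNReal.tendsto_nhds_zero.1 hzero _ hε2)
  set s := hlarge.toFinset
  have hs : Tendsto (fun n => ∑ y ∈ s, pow P n x y * h y) atTop (𝓝 0) := by
    simpa using tendsto_finsetSum s fun y _ =>
      ENNReal.Tendsto.mul_const (hpow y) (Or.inr (hfin y))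
  filter_upwards [ENNReal.tendsto_nhds_zero.1 hs _ hε2] with n hn
  calc ∑' y, pow P n x y * h y
      ≤ ∑' y, ((s : Set α).indicator (fun y => pow P n x y * h y) y + ε / 2 * pow P n x y) := by
        refine ENNReal.tsum_le_tsum fun y => ?_
        by_cases hy : y ∈ s
        · rw [Set.indicator_of_mem (Finset.mem_coe.2 hy)]
          exact le_self_add
        · rw [Set.indicator_of_notMem (by simpa using hy), zero_add, mul_comm]
          gcongr
          simpa [s] using hy
    _ = ∑ y ∈ s, pow P n x y * h y + ε / 2 * ∑' y, pow P n x y := by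
        rw [ENNReal.tsum_add, ENNReal.tsum_mul_left, ← sum_eq_tsum_indicator]
    _ ≤ ε / 2 + ε / 2 * 1 := by gcongr; exact tsum_pow_le_one hP n x
    _ = ε := by rw [mul_one, ENNReal.add_halves]

section Harmonic

variable {o : α} {c : ℝ≥0∞} {h : α → ℝ≥0∞}

theorem tsum_pow_mul_add_mul_sum (hharm : ∀ x ≠ o, ∑' y, P x y * h y = h x)
    (hdefect : ∑' y, P o y * h y + c = h o) (x : α) (n : ℕ) :
    ∑' y, pow P n x y * h y + c * ∑ k ∈ range n, pow P k x o = h x := by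
  induction n with
  | zero => simp [tsum_pow_zero_mul]
  | succ n ih =>
    have hstep : c * pow P n x o = ∑' z, pow P n x z * if z = o then c else 0 := by
      rw [tsum_eq_single o fun z hz => by rw [if_neg hz, mul_zero], if_pos rfl, mul_comm]
    rw [← ih, sum_range_succ, mul_add, ← add_assoc, tsum_pow_succ_mul, add_right_comm, hstep,
      ← ENNReal.tsum_add]
    congr 1
    refine tsum_congr fun z => ?_
    rw [← mul_add]
    split_ifs with hz
    · rw [hz, hdefect]
    · rw [add_zero, hharm z hz]

theorem mul_green_eq_of_harmonic (hP : ∀ x, ∑' y, P x y ≤ 1)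
    (hharm : ∀ x ≠ o, ∑' y, P x y * h y = h x) (hdefect : ∑' y, P o y * h y + c = h o)
    (hc : c ≠ 0) (hfin : ∀ y, h y ≠ ⊤) (hzero : Tendsto h cofinite (𝓝 0))
    (hreach : ∀ y, ∃ m, pow P m y o ≠ 0) (x : α) :
    c * green P x o = h x := by
  have hpartial : Tendsto (fun n => c * ∑ k ∈ range n, pow P k x o) atTop
      (𝓝 (c * green P x o)) := by
    simp_rw [mul_sum]
    rw [green, ← ENNReal.tsum_mul_left]
    exact ENNReal.tendsto_nat_tsum _
  have hle : c * green P x o ≤ h x := le_of_tendsto' hpartial fun n =>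
    tsum_pow_mul_add_mul_sum hharm hdefect x n ▸ le_add_self
  have hG : green P x o ≠ ⊤ := fun hG => by
    rw [hG, ENNReal.mul_top hc] at hle
    exact hfin x (top_le_iff.1 hle)
  have hE := tendsto_tsum_pow_mul_of_tendsto_cofinite hP hfin hzero fun y =>
    (hreach y).elim fun _ hm => tendsto_pow_of_green_ne_top hG hm
  have hlim := hE.add hpartial
  simp only [tsum_pow_mul_add_mul_sum hharm hdefect x, zero_add] at hlim
  exact tendsto_nhds_unique hlim tendsto_const_nhds

end Harmonic

end RandomWalk

theorem List.tendsto_length_cofinite {α : Type*} [Finite α] :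
    Filter.Tendsto (List.length : List α → ℕ) Filter.cofinite Filter.atTop :=
  Nat.cofinite_eq_atTop ▸ Filter.Tendsto.cofinite_of_finite_preimage_singleton fun n =>
    (List.finite_length_eq α n).to_subtype

section Sierpinski

open Filter Topology

variable {lam C1 C2 : ℝ}

theorem sgCond_nonneg (hlam : 0 ≤ lam) (hC1 : 0 ≤ C1) (hC2 : 0 ≤ C2) (x y : Word) :
    0 ≤ sgCond lam C1 C2 x y := by
  unfold sgCond
  split_ifs <;> positivity

theorem sgCond_ne_zero {x z : Word} (h : sgCond lam C1 C2 x z ≠ 0) :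
    (∃ i, x = z ++ [i]) ∨ (∃ i, z = x ++ [i]) ∨ (z.length = x.length ∧ z ≠ x) := by
  unfold sgCond at h
  split_ifs at h with hparent hchild hsame
  · obtain ⟨hx, rfl⟩ := hparent
    exact Or.inl ⟨x.getLast hx, (List.dropLast_append_getLast hx).symm⟩
  · obtain ⟨hz, rfl⟩ := hchild
    exact Or.inr (Or.inl ⟨z.getLast hz, (List.dropLast_append_getLast hz).symm⟩)
  all_goals first
    | exact Or.inr (Or.inr ⟨hsame.1.symm, Ne.symm hsame.2.1⟩)
    | exact absurd rfl h

theorem length_le_of_sgCond_ne_zero {x z : Word} (h : sgCond lam C1 C2 x z ≠ 0) :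
    z.length ≤ x.length + 1 := by
  rcases sgCond_ne_zero h with ⟨i, rfl⟩ | ⟨i, rfl⟩ | ⟨hlen, -⟩
  · simp only [List.length_append, List.length_singleton]
    omega
  · simp
  · omega

theorem summable_sgCond_mul (x : Word) (g : Word → ℝ) :
    Summable fun z => sgCond lam C1 C2 x z * g z :=
  summable_of_ne_finset_zero (f := fun z => sgCond lam C1 C2 x z * g z)
    (s := (List.finite_length_le (Fin 3) (x.length + 1)).toFinset) fun z hz => by
      by_contra h
      exact hz (by simpa using length_le_of_sgCond_ne_zero (left_ne_zero_of_mul h))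

theorem sgCond_append_singleton (x : Word) (i : Fin 3) :
    sgCond lam C1 C2 x (x ++ [i]) = (1 / (3 * lam)) ^ x.length := by
  have hlen : x ++ [i] ≠ x.dropLast := fun h => by
    have := congrArg List.length h
    simp only [List.length_append, List.length_singleton, List.length_dropLast] at this
    omega
  simp [sgCond, hlen]

theorem sgCond_append_singleton_left (x : Word) (i : Fin 3) :
    sgCond lam C1 C2 (x ++ [i]) x = (1 / (3 * lam)) ^ x.length := by
  simp [sgCond]

theorem sgCond_nil_eq_zero {z : Word} (hz : z.length ≠ 1) : sgCond lam C1 C2 [] z = 0 := by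
  by_contra h
  rcases sgCond_ne_zero h with ⟨i, hi⟩ | ⟨i, rfl⟩ | ⟨hlen, hne⟩
  · simp at hi
  · simp at hz
  · exact hne (List.eq_nil_of_length_eq_zero hlen)

theorem sgPi_pos (hlam : 0 < lam) (hC1 : 0 ≤ C1) (hC2 : 0 ≤ C2) (x : Word) :
    0 < sgPi lam C1 C2 x := by
  have hs : Summable (sgCond lam C1 C2 x) := by simpa using summable_sgCond_mul x 1
  calc 0 < (1 / (3 * lam)) ^ x.length := by positivity
    _ = sgCond lam C1 C2 x (x ++ [0]) := (sgCond_append_singleton x 0).symm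
    _ ≤ sgPi lam C1 C2 x := hs.le_tsum _ fun z _ => sgCond_nonneg hlam.le hC1 hC2 x z

theorem tsum_sgCond_mul_pow_sub (hlam : 0 < lam) (l : Word) (i : Fin 3) :
    ∑' z, sgCond lam C1 C2 (l ++ [i]) z * (lam ^ z.length - lam ^ (l.length + 1)) = 0 := by
  set x := l ++ [i]
  set f := fun z : Word => sgCond lam C1 C2 x z * (lam ^ z.length - lam ^ (l.length + 1))
  have hsupp : ∀ z ∉ insert l (Finset.univ.image fun j : Fin 3 => x ++ [j]), f z = 0 := by
    intro z hz
    by_contra hfz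
    rcases sgCond_ne_zero (left_ne_zero_of_mul hfz) with ⟨j, hj⟩ | ⟨j, rfl⟩ | ⟨hlen, -⟩
    · have hzl : z = l := by simpa [x] using (congrArg List.dropLast hj).symm
      simp [hzl] at hz
    · simp at hz
    · simp [f, hlen, x] at hfz
  have hl : l ∉ Finset.univ.image fun j : Fin 3 => x ++ [j] := by
    simp only [Finset.mem_image, not_exists, not_and]
    intro j _ h
    simpa [x] using congrArg List.length h
  have hinj : Set.InjOn (fun j : Fin 3 => x ++ [j]) Set.univ := fun j _ k _ h => by
    simpa using h
  rw [tsum_eq_sum hsupp, Finset.sum_insert hl, Finset.sum_image (by simpa using hinj)]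
  simp only [f, x, sgCond_append_singleton_left, sgCond_append_singleton, List.length_append,
    List.length_singleton, Finset.sum_const, Finset.card_univ, Fintype.card_fin, nsmul_eq_mul,
    pow_succ]
  field_simp
  ring

theorem tsum_sgCond_nil_mul_pow :
    ∑' z, sgCond lam C1 C2 [] z * lam ^ z.length = lam * sgPi lam C1 C2 [] := by
  rw [sgPi, ← tsum_mul_left]
  refine tsum_congr fun z => ?_
  by_cases hz : z.length = 1
  · simp [hz, mul_comm]
  · simp [sgCond_nil_eq_zero hz]

theorem tsum_sgCond_mul_pow (hlam : 0 < lam) {x : Word} (hx : x ≠ []) :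
    ∑' z, sgCond lam C1 C2 x z * lam ^ z.length = lam ^ x.length * sgPi lam C1 C2 x := by
  obtain ⟨l, i, rfl⟩ := (x.eq_nil_or_concat').resolve_left hx
  have hsub := tsum_sgCond_mul_pow_sub (C1 := C1) (C2 := C2) hlam l i
  simp only [mul_sub] at hsub
  rw [Summable.tsum_sub (summable_sgCond_mul _ _) (summable_sgCond_mul _ _), sub_eq_zero,
    tsum_mul_right] at hsub
  simpa [mul_comm, sgPi] using hsub

theorem tsum_sgP_mul_ofReal (hlam : 0 < lam) (hC1 : 0 ≤ C1) (hC2 : 0 ≤ C2) (x : Word)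
    {f : Word → ℝ} (hf : ∀ z, 0 ≤ f z) :
    ∑' z, sgP lam C1 C2 x z * ENNReal.ofReal (f z)
      = ENNReal.ofReal ((∑' z, sgCond lam C1 C2 x z * f z) / sgPi lam C1 C2 x) := by
  have hπ := sgPi_pos hlam hC1 hC2 x
  have hc := sgCond_nonneg hlam.le hC1 hC2 x
  rw [← tsum_div_const, ENNReal.ofReal_tsum_of_nonneg
    (fun z => div_nonneg (mul_nonneg (hc z) (hf z)) hπ.le) ((summable_sgCond_mul x f).div_const _)]
  refine tsum_congr fun z => ?_
  rw [sgP, ← ENNReal.ofReal_mul (div_nonneg (hc z) hπ.le), div_mul_eq_mul_div]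

theorem tsum_sgP (hlam : 0 < lam) (hC1 : 0 ≤ C1) (hC2 : 0 ≤ C2) (x : Word) :
    ∑' z, sgP lam C1 C2 x z = 1 := by
  have h := tsum_sgP_mul_ofReal hlam hC1 hC2 x (f := fun _ => 1) fun _ => zero_le_one
  simp only [ENNReal.ofReal_one, mul_one] at h
  rw [h, ← sgPi, div_self (sgPi_pos hlam hC1 hC2 x).ne', ENNReal.ofReal_one]

theorem tsum_sgP_mul_pow (hlam : 0 < lam) (hC1 : 0 ≤ C1) (hC2 : 0 ≤ C2) {x : Word}
    (hx : x ≠ []) :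
    ∑' z, sgP lam C1 C2 x z * ENNReal.ofReal (lam ^ z.length)
      = ENNReal.ofReal (lam ^ x.length) := by
  rw [tsum_sgP_mul_ofReal hlam hC1 hC2 x fun _ => by positivity, tsum_sgCond_mul_pow hlam hx,
    mul_div_assoc, div_self (sgPi_pos hlam hC1 hC2 x).ne', mul_one]

theorem tsum_sgP_nil_mul_pow (hlam : 0 < lam) (hC1 : 0 ≤ C1) (hC2 : 0 ≤ C2) :
    ∑' z, sgP lam C1 C2 [] z * ENNReal.ofReal (lam ^ z.length) = ENNReal.ofReal lam := by
  rw [tsum_sgP_mul_ofReal hlam hC1 hC2 [] fun _ => by positivity, tsum_sgCond_nil_mul_pow,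
    mul_div_assoc, div_self (sgPi_pos hlam hC1 hC2 []).ne', mul_one]

theorem pow_sgP_length_ne_zero (hlam : 0 < lam) (hC1 : 0 ≤ C1) (hC2 : 0 ≤ C2) (x : Word) :
    RandomWalk.pow (sgP lam C1 C2) x.length x [] ≠ 0 := by
  induction x using List.reverseRecOn with
  | nil => simp [RandomWalk.pow_zero_apply]
  | append_singleton l i ih =>
    have hparent : sgP lam C1 C2 (l ++ [i]) l ≠ 0 := by
      rw [sgP, sgCond_append_singleton_left]
      exact (ENNReal.ofReal_pos.2 (div_pos (by positivity) (sgPi_pos hlam hC1 hC2 _))).ne'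
    rw [List.length_append, List.length_singleton, RandomWalk.pow_succ_apply]
    exact ((ENNReal.mul_pos hparent ih).trans_le (ENNReal.le_tsum l)).ne'

theorem tendsto_ofReal_pow_length (hlam : 0 ≤ lam) (hlam1 : lam < 1) :
    Tendsto (fun x : Word => ENNReal.ofReal (lam ^ x.length)) cofinite (𝓝 0) :=
  ENNReal.ofReal_zero ▸ (ENNReal.tendsto_ofReal
    (tendsto_pow_atTop_nhds_zero_of_lt_one hlam hlam1)).comp List.tendsto_length_cofinite

theorem sgPk_eq_pow : sgPk lam C1 C2 = RandomWalk.pow (sgP lam C1 C2) := by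
  funext n
  induction n with
  | zero => funext x y; by_cases h : x = y <;> simp [sgPk, RandomWalk.pow_zero_apply, h]
  | succ n ih => funext x y; simp [sgPk, RandomWalk.pow_succ_apply, ih]

theorem sgG_eq_green : sgG lam C1 C2 = RandomWalk.green (sgP lam C1 C2) := by
  funext x y
  simp [sgG, RandomWalk.green, sgPk_eq_pow]

theorem sgFk_eq_firstHit : sgFk lam C1 C2 = RandomWalk.firstHit (sgP lam C1 C2) [] := by
  funext n
  induction n with
  | zero => funext x; by_cases h : x = [] <;> simp [sgFk, RandomWalk.firstHit, h]
  | succ n ih => funext x; simp [sgFk, RandomWalk.firstHit, ih]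

theorem sgF_eq_hitProb : sgF lam C1 C2 = RandomWalk.hitProb (sgP lam C1 C2) [] := by
  funext x
  simp [sgF, RandomWalk.hitProb, sgFk_eq_firstHit]

theorem ofReal_one_sub_mul_sgG (hlam : 0 < lam) (hlam1 : lam < 1) (hC1 : 0 ≤ C1)
    (hC2 : 0 ≤ C2) (x : Word) :
    ENNReal.ofReal (1 - lam) * sgG lam C1 C2 x [] = ENNReal.ofReal (lam ^ x.length) := by
  rw [sgG_eq_green]
  have hdefect : ENNReal.ofReal lam + ENNReal.ofReal (1 - lam) = ENNReal.ofReal (lam ^ 0) := by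
    rw [← ENNReal.ofReal_add hlam.le (by linarith), add_sub_cancel, pow_zero]
  exact RandomWalk.mul_green_eq_of_harmonic (fun x => (tsum_sgP hlam hC1 hC2 x).le)
    (fun _ hx => tsum_sgP_mul_pow hlam hC1 hC2 hx)
    ((tsum_sgP_nil_mul_pow hlam hC1 hC2).symm ▸ hdefect) (by simpa using hlam1)
    (fun _ => ENNReal.ofReal_ne_top) (tendsto_ofReal_pow_length hlam.le hlam1)
    (fun y => ⟨y.length, pow_sgP_length_ne_zero hlam hC1 hC2 y⟩) x

end Sierpinski

/-- For the λ-return ratio random walk on the Sierpiński graph with `λ ∈ (0,1)`: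
`G(o,o) = 1/(1-λ)` and `F(x,o) = λ^{|x|}` for every vertex `x`. -/
theorem stmt_13 (lam C1 C2 : ℝ) (hl0 : 0 < lam) (hl1 : lam < 1)
    (hC1 : 0 < C1) (hC2 : 0 < C2) :
    sgG lam C1 C2 [] [] = ENNReal.ofReal (1 / (1 - lam)) ∧
    ∀ x : Word, sgF lam C1 C2 x = ENNReal.ofReal (lam ^ x.length) := by
  have hG := ofReal_one_sub_mul_sgG hl0 hl1 hC1.le hC2.le
  have hroot : ENNReal.ofReal (1 - lam) * sgG lam C1 C2 [] [] = 1 := by simpa using hG []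
  refine ⟨?_, fun x => ?_⟩
  · rw [one_div, ENNReal.ofReal_inv_of_pos (by linarith)]
    exact ENNReal.eq_inv_of_mul_eq_one_left (by rwa [mul_comm])
  · rw [← hG x, sgG_eq_green, RandomWalk.green_eq_hitProb_mul, ← sgG_eq_green,
      ← sgF_eq_hitProb, mul_left_comm, hroot, mul_one]

end
end
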